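/- arXiv:1711.08264 — 5 statements merged into one kernel-verified Lean document; each statement's English description precedes it below -/
import Mathlib

section
/- Let B be a bipartite graph with parts D and Y1 ⊔ Y2, where all edges go between D and Y1 ∪ Y2. Then there exists a maximum matching M of B such that the restriction of M to the induced subgraph on D ⊔ Y1 is a maximum matching of that induced subgraph. -/
/-- In a bipartite graph with parts `D` and `Y1 ⊔ Y2`, there exists a maximum
matching whose restriction to the induced subgraph on `D ⊔ Y1` is a maximum
matching of that induced subgraph. -/
theorem exists_maximum_matching_restricting_to_maximum
    {D Y1 Y2 : Type*} [Fintype D] [Fintype Y1] [Fintype Y2]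
    [DecidableEq D] [DecidableEq Y1] [DecidableEq Y2]
    (E : D → Y1 ⊕ Y2 → Prop) :
    ∃ M : Finset (D × (Y1 ⊕ Y2)),
      -- `M` is a matching of `B`
      ((∀ p ∈ M, E p.1 p.2) ∧
        (∀ p ∈ M, ∀ q ∈ M, p ≠ q → p.1 ≠ q.1 ∧ p.2 ≠ q.2)) ∧
      -- `M` is a maximum matching of `B`
      (∀ N : Finset (D × (Y1 ⊕ Y2)),
        ((∀ p ∈ N, E p.1 p.2) ∧
          (∀ p ∈ N, ∀ q ∈ N, p ≠ q → p.1 ≠ q.1 ∧ p.2 ≠ q.2)) →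
        N.card ≤ M.card) ∧
      -- the restriction of `M` to `D ⊔ Y1` is a maximum matching of the
      -- induced subgraph on `D ⊔ Y1`
      (∀ N : Finset (D × (Y1 ⊕ Y2)),
        ((∀ p ∈ N, E p.1 p.2) ∧
          (∀ p ∈ N, ∀ q ∈ N, p ≠ q → p.1 ≠ q.1 ∧ p.2 ≠ q.2) ∧
          (∀ p ∈ N, p.2.isLeft = true)) →
        N.card ≤ (M.filter (fun p => p.2.isLeft = true)).card) := by
  classical
  set C : ℕ := Fintype.card (D × (Y1 ⊕ Y2)) + 1 with hC
  set v : Finset (D × (Y1 ⊕ Y2)) → ℕ :=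
    fun S => C * S.card + (S.filter (fun p => p.2.isLeft = true)).card with hv
  set isM : Finset (D × (Y1 ⊕ Y2)) → Prop := fun S =>
    (∀ p ∈ S, E p.1 p.2) ∧ (∀ p ∈ S, ∀ q ∈ S, p ≠ q → p.1 ≠ q.1 ∧ p.2 ≠ q.2)
    with hisM
  -- choose M maximizing v among matchings
  obtain ⟨M, hMmem, hmax0⟩ :=
    Finset.exists_max_image (Finset.univ.filter isM) v
      ⟨∅, by simp [hisM]⟩
  have hM : isM M := (Finset.mem_filter.mp hMmem).2
  have hmax : ∀ M', isM M' → v M' ≤ v M := fun M' h =>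
    hmax0 M' (Finset.mem_filter.mpr ⟨Finset.mem_univ _, h⟩)
  -- card of snd-image for matchings
  have cardim : ∀ (S : Finset (D × (Y1 ⊕ Y2))),
      (∀ p ∈ S, ∀ q ∈ S, p ≠ q → p.1 ≠ q.1 ∧ p.2 ≠ q.2) →
      (S.image Prod.snd).card = S.card := by
    intro S hS
    apply Finset.card_image_of_injOn
    intro p hp q hq h
    by_contra hne
    exact (hS p hp q hq hne).2 h
  -- key exchange lemma
  have key : ∀ k : ℕ, ∀ M : Finset (D × (Y1 ⊕ Y2)), isM M →
      (∀ M', isM M' → v M' ≤ v M) →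
      ∀ N : Finset (D × (Y1 ⊕ Y2)),
      (∀ p ∈ N, E p.1 p.2) →
      (∀ p ∈ N, ∀ q ∈ N, p ≠ q → p.1 ≠ q.1 ∧ p.2 ≠ q.2) →
      (∀ p ∈ N, p.2.isLeft = true) → (N \ M).card ≤ k →
      N.card ≤ (M.filter (fun p => p.2.isLeft = true)).card := by
    intro k
    induction k with
    | zero =>
      intro M hMi _ N _ _ hNl hk
      have hsub : N ⊆ M.filter (fun p => p.2.isLeft = true) := by
        intro p hp
        refine Finset.mem_filter.mpr ⟨?_, hNl p hp⟩
        by_contra hpm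
        have : p ∈ N \ M := Finset.mem_sdiff.mpr ⟨hp, hpm⟩
        have := Finset.card_pos.mpr ⟨p, this⟩
        omega
      exact Finset.card_le_card hsub
    | succ k ih =>
      intro M hMi hmaxM N hNE hNm hNl hk
      by_contra hcon
      push_neg at hcon
      -- find p ∈ N with p.2 not covered by the left part of M
      have hA : (N.image Prod.snd).card = N.card := cardim N hNm
      have hB : ((M.filter (fun p => p.2.isLeft = true)).image Prod.snd).card
          = (M.filter (fun p => p.2.isLeft = true)).card := by
        refine cardim _ ?_
        intro p hp q hq hne
        exact hMi.2 p (Finset.mem_filter.mp hp).1 q (Finset.mem_filter.mp hq).1 hne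
      have hlt : ¬ (N.image Prod.snd) ⊆
          ((M.filter (fun p => p.2.isLeft = true)).image Prod.snd) := by
        intro h
        have := Finset.card_le_card h
        omega
      obtain ⟨z, hzA, hzB⟩ := Finset.not_subset.mp hlt
      obtain ⟨p, hpN, hpz⟩ := Finset.mem_image.mp hzA
      subst hpz
      have hz : ∀ q ∈ M, q.2 ≠ p.2 := by
        intro q hq h
        apply hzB
        refine Finset.mem_image.mpr ⟨q, Finset.mem_filter.mpr ⟨hq, ?_⟩, h⟩
        rw [h]; exact hNl p hpN
      have hpM : p ∉ M := fun h => hz p h rfl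
      by_cases hd : ∃ q ∈ M, q.1 = p.1 ∧ q.2.isLeft = true
      · -- p.1 is matched to a left vertex in M: swap
        obtain ⟨q0, hq0M, hq01, hq0L⟩ := hd
        set M' := insert p (M.erase q0) with hM'
        have hq0p : q0 ≠ p := fun h => hpM (h ▸ hq0M)
        have hpe : p ∉ M.erase q0 := fun h => hpM (Finset.mem_of_mem_erase h)
        have hM'i : isM M' := by
          constructor
          · intro a ha
            rcases Finset.mem_insert.mp ha with h | h
            · subst h; exact hNE _ hpN
            · exact hMi.1 a (Finset.mem_of_mem_erase h)
          · intro a ha b hb hab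
            rcases Finset.mem_insert.mp ha with h1 | h1 <;>
              rcases Finset.mem_insert.mp hb with h2 | h2
            · exact absurd (h1.trans h2.symm) hab
            · subst h1
              have hbM := Finset.mem_of_mem_erase h2
              have hbq0 := Finset.ne_of_mem_erase h2
              constructor
              · intro h
                exact (hMi.2 b hbM q0 hq0M hbq0).1 (h ▸ hq01).symm
              · exact fun h => hz b hbM h.symm
            · subst h2
              have haM := Finset.mem_of_mem_erase h1
              have haq0 := Finset.ne_of_mem_erase h1
              constructor
              · intro h
                exact (hMi.2 a haM q0 hq0M haq0).1 (h.symm ▸ hq01).symm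
              · exact fun h => hz a haM h
            · exact hMi.2 a (Finset.mem_of_mem_erase h1) b (Finset.mem_of_mem_erase h2) hab
        have hq0f : q0 ∈ M.filter (fun p => p.2.isLeft = true) :=
          Finset.mem_filter.mpr ⟨hq0M, hq0L⟩
        have hcard : M'.card = M.card := by
          rw [hM', Finset.card_insert_of_notMem hpe, Finset.card_erase_of_mem hq0M]
          have : 1 ≤ M.card := Finset.card_pos.mpr ⟨q0, hq0M⟩
          omega
        have hfil : (M'.filter (fun p => p.2.isLeft = true)).card
            = (M.filter (fun p => p.2.isLeft = true)).card := by
          rw [hM', Finset.filter_insert, if_pos (hNl p hpN), Finset.filter_erase,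
            Finset.card_insert_of_notMem
              (fun h => hpM (Finset.mem_of_mem_filter p (Finset.mem_of_mem_erase h))),
            Finset.card_erase_of_mem hq0f]
          have : 1 ≤ (M.filter (fun p => p.2.isLeft = true)).card :=
            Finset.card_pos.mpr ⟨q0, hq0f⟩
          omega
        have hvM' : v M' = v M := by
          rw [hv]
          simp only
          rw [hcard, hfil]
        have hmaxM' : ∀ M'', isM M'' → v M'' ≤ v M' := by
          intro M'' h
          rw [hvM']
          exact hmaxM M'' h
        have hsub : N \ M' ⊆ (N \ M).erase p := by
          intro r hr
          obtain ⟨hrN, hrM'⟩ := Finset.mem_sdiff.mp hr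
          have hrp : r ≠ p := fun h => hrM' (h ▸ Finset.mem_insert_self p _)
          refine Finset.mem_erase.mpr ⟨hrp, Finset.mem_sdiff.mpr ⟨hrN, ?_⟩⟩
          intro hrM
          have hrq0 : r = q0 := by
            by_contra hne
            exact hrM' (Finset.mem_insert_of_mem (Finset.mem_erase.mpr ⟨hne, hrM⟩))
          subst hrq0
          exact (hNm r hrN p hpN hq0p).1 hq01
        have hk' : (N \ M').card ≤ k := by
          have h1 := Finset.card_le_card hsub
          have h2 : ((N \ M).erase p).card = (N \ M).card - 1 :=
            Finset.card_erase_of_mem (Finset.mem_sdiff.mpr ⟨hpN, hpM⟩)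
          have h3 : 1 ≤ (N \ M).card :=
            Finset.card_pos.mpr ⟨p, Finset.mem_sdiff.mpr ⟨hpN, hpM⟩⟩
          omega
        have := ih M' hM'i hmaxM' N hNE hNm hNl hk'
        rw [hfil] at this
        exact hcon.not_ge this
      · -- p.1 is not matched to a left vertex in M: augment
        push_neg at hd
        set M' := insert p (M.filter (fun q => q.1 ≠ p.1)) with hM'
        have hpf : p ∉ M.filter (fun q => q.1 ≠ p.1) :=
          fun h => hpM (Finset.mem_of_mem_filter p h)
        have hM'i : isM M' := by
          constructor
          · intro a ha
            rcases Finset.mem_insert.mp ha with h | h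
            · subst h; exact hNE _ hpN
            · exact hMi.1 a (Finset.mem_of_mem_filter a h)
          · intro a ha b hb hab
            rcases Finset.mem_insert.mp ha with h1 | h1 <;>
              rcases Finset.mem_insert.mp hb with h2 | h2
            · exact absurd (h1.trans h2.symm) hab
            · subst h1
              obtain ⟨hbM, hb1⟩ := Finset.mem_filter.mp h2
              exact ⟨fun h => hb1 h.symm, fun h => hz b hbM h.symm⟩
            · subst h2
              obtain ⟨haM, ha1⟩ := Finset.mem_filter.mp h1
              exact ⟨ha1, fun h => hz a haM h⟩
            · exact hMi.2 a (Finset.mem_of_mem_filter a h1)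
                b (Finset.mem_of_mem_filter b h2) hab
        have hone : (M.filter (fun q => ¬ q.1 ≠ p.1)).card ≤ 1 := by
          refine Finset.card_le_one.mpr ?_
          intro a ha b hb
          obtain ⟨haM, ha1⟩ := Finset.mem_filter.mp ha
          obtain ⟨hbM, hb1⟩ := Finset.mem_filter.mp hb
          by_contra hne
          push_neg at ha1 hb1
          exact (hMi.2 a haM b hbM hne).1 (ha1.trans hb1.symm)
        have hsplit := Finset.card_filter_add_card_filter_not
          (s := M) (p := fun q => q.1 ≠ p.1)
        have hcard : M.card ≤ M'.card := by
          rw [hM', Finset.card_insert_of_notMem hpf]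
          omega
        have hff : (M.filter (fun q => q.1 ≠ p.1)).filter (fun p => p.2.isLeft = true)
            = M.filter (fun p => p.2.isLeft = true) := by
          ext q
          simp only [Finset.mem_filter]
          constructor
          · rintro ⟨⟨h1, _⟩, h3⟩; exact ⟨h1, h3⟩
          · rintro ⟨h1, h3⟩
            exact ⟨⟨h1, fun hq => hd q h1 hq h3⟩, h3⟩
        have hfil : (M'.filter (fun p => p.2.isLeft = true)).card
            = (M.filter (fun p => p.2.isLeft = true)).card + 1 := by
          rw [hM', Finset.filter_insert, if_pos (hNl p hpN), hff,
            Finset.card_insert_of_notMem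
              (fun h => hpM (Finset.mem_of_mem_filter p h))]
        have hle := hmaxM M' hM'i
        rw [hv] at hle
        simp only at hle
        rw [hfil] at hle
        have hmul : C * M.card ≤ C * M'.card := Nat.mul_le_mul_left C hcard
        omega
  refine ⟨M, ⟨hM.1, hM.2⟩, ?_, ?_⟩
  · intro N hN
    have h := hmax N hN
    rw [hv] at h
    simp only at h
    by_contra hc
    push_neg at hc
    have h2 : C * (M.card + 1) ≤ C * N.card := Nat.mul_le_mul_left C hc
    rw [Nat.mul_succ] at h2
    have h3 : (M.filter (fun p => p.2.isLeft = true)).card ≤ M.card :=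
      Finset.card_filter_le M _
    have h4 : M.card ≤ Fintype.card (D × (Y1 ⊕ Y2)) := Finset.card_le_univ M
    omega
  · rintro N ⟨hNE, hNm, hNl⟩
    exact key (N \ M).card M hM hmax N hNE hNm hNl le_rfl
end

section
/- Let h : 2^V → ℝ≥0 be monotone non-decreasing submodular with h(∅) = 0 on a finite set V, and let r be a positive integer. Let Δ* be the set of size r produced by the greedy algorithm that at each of r steps adds an element with maximum marginal gain, and let Δ' be a maximizer of h over all subsets of V of cardinality at most r. Then h(Δ*) ≥ (1 − 1/e) · h(Δ'). -/
/-- Submodular sum bound: `h (S ∪ T) - h S ≤ ∑ v in T, (h (insert v S) - h S)`. -/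
lemma submodular_union_sum_bound
    {V : Type*} [DecidableEq V]
    (h : Finset V → ℝ)
    (hmono : ∀ S T : Finset V, S ⊆ T → h S ≤ h T)
    (hsub : ∀ S T : Finset V, ∀ v : V, S ⊆ T → v ∉ T →
      h (insert v T) - h T ≤ h (insert v S) - h S)
    (T S : Finset V) :
    h (S ∪ T) - h S ≤ ∑ v ∈ T, (h (insert v S) - h S) := by
  induction T using Finset.induction with
  | empty => simp
  | @insert a T' ha ih =>
    rw [Finset.sum_insert ha]
    have key : h (S ∪ insert a T') - h (S ∪ T') ≤ h (insert a S) - h S := by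
      by_cases haS : a ∈ S ∪ T'
      · have haS' : a ∈ S := by
          rcases Finset.mem_union.mp haS with h1 | h1
          · exact h1
          · exact absurd h1 ha
        have e1 : S ∪ insert a T' = S ∪ T' := by
          rw [Finset.union_insert, Finset.insert_eq_self.mpr haS]
        have e2 : insert a S = S := Finset.insert_eq_self.mpr haS'
        rw [e1, e2]
        simp
      · have e1 : S ∪ insert a T' = insert a (S ∪ T') := by
          rw [Finset.union_insert]
        rw [e1]
        exact hsub S (S ∪ T') a Finset.subset_union_left haS
    linarith

/-- The `(1 − 1/e)` guarantee for greedy maximization of a monotone submodular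
function subject to a cardinality constraint `|Δ| ≤ r`. -/
theorem greedy_submodular_maximization_bound
    {V : Type*} [Fintype V] [DecidableEq V]
    (h : Finset V → ℝ) (r : ℕ) (hr : 0 < r)
    (hnonneg : ∀ S : Finset V, 0 ≤ h S)
    (hmono : ∀ S T : Finset V, S ⊆ T → h S ≤ h T)
    (hsub : ∀ S T : Finset V, ∀ v : V, S ⊆ T → v ∉ T →
      h (insert v T) - h T ≤ h (insert v S) - h S)
    (hzero : h ∅ = 0)
    (Δ : ℕ → Finset V)
    (hΔ0 : Δ 0 = ∅)
    (hgreedy : ∀ i, i < r → ∃ a : V, a ∉ Δ i ∧ Δ (i + 1) = insert a (Δ i) ∧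
      ∀ b : V, b ∉ Δ i →
        h (insert b (Δ i)) - h (Δ i) ≤ h (insert a (Δ i)) - h (Δ i))
    (Δ' : Finset V) (hΔ'card : Δ'.card ≤ r)
    (hΔ'opt : ∀ T : Finset V, T.card ≤ r → h T ≤ h Δ') :
    (1 - 1 / Real.exp 1) * h Δ' ≤ h (Δ r) := by
  have hrR : (0:ℝ) < (r:ℝ) := by exact_mod_cast hr
  -- key recurrence
  have step : ∀ i, i < r →
      h Δ' - h (Δ (i+1)) ≤ (1 - 1/(r:ℝ)) * (h Δ' - h (Δ i)) := by
    intro i hi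
    obtain ⟨a, haΔ, hΔsucc, hmax⟩ := hgreedy i hi
    set δ := h (Δ (i+1)) - h (Δ i) with hδ
    have hδ0 : 0 ≤ δ := by
      have := hmono (Δ i) (insert a (Δ i)) (Finset.subset_insert _ _)
      rw [hδ, hΔsucc]; linarith
    -- each marginal at Δ i is ≤ δ
    have hterm : ∀ v ∈ Δ', h (insert v (Δ i)) - h (Δ i) ≤ δ := by
      intro v _
      by_cases hv : v ∈ Δ i
      · rw [Finset.insert_eq_self.mpr hv]; linarith
      · have := hmax v hv
        rw [hδ, hΔsucc]; linarith
    have hsum : ∑ v ∈ Δ', (h (insert v (Δ i)) - h (Δ i)) ≤ (Δ'.card : ℝ) * δ := by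
      calc ∑ v ∈ Δ', (h (insert v (Δ i)) - h (Δ i)) ≤ ∑ _v ∈ Δ', δ :=
            Finset.sum_le_sum hterm
        _ = (Δ'.card : ℝ) * δ := by rw [Finset.sum_const, nsmul_eq_mul]
    have hcard : (Δ'.card : ℝ) * δ ≤ (r:ℝ) * δ := by
      apply mul_le_mul_of_nonneg_right _ hδ0
      exact_mod_cast hΔ'card
    have hub : h Δ' ≤ h (Δ i ∪ Δ') := hmono _ _ Finset.subset_union_right
    have hkey := submodular_union_sum_bound h hmono hsub Δ' (Δ i)
    -- h Δ' - h (Δ i) ≤ r * δ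
    have hmain : h Δ' - h (Δ i) ≤ (r:ℝ) * δ := by linarith
    have : h Δ' - h (Δ (i+1)) = (h Δ' - h (Δ i)) - δ := by rw [hδ]; ring
    rw [this]
    have : (1 - 1/(r:ℝ)) * (h Δ' - h (Δ i)) = (h Δ' - h (Δ i)) - (h Δ' - h (Δ i))/(r:ℝ) := by
      field_simp
    rw [this]
    have : (h Δ' - h (Δ i))/(r:ℝ) ≤ δ := by
      rw [div_le_iff₀ hrR]; linarith
    linarith
  -- induction: h Δ' - h (Δ i) ≤ (1-1/r)^i * h Δ'
  have hq0 : (0:ℝ) ≤ 1 - 1/(r:ℝ) := by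
    have : (1:ℝ) ≤ (r:ℝ) := by exact_mod_cast hr
    have : 1/(r:ℝ) ≤ 1 := by
      rw [div_le_one hrR]; exact this
    linarith
  have hopt0 : 0 ≤ h Δ' := hnonneg _
  have ind : ∀ i, i ≤ r → h Δ' - h (Δ i) ≤ (1 - 1/(r:ℝ))^i * h Δ' := by
    intro i
    induction i with
    | zero => intro _; simp [hΔ0, hzero]
    | succ n ihn =>
      intro hn
      have hnr : n < r := Nat.lt_of_succ_le hn
      have h1 := step n hnr
      have h2 := ihn (Nat.le_of_lt hnr)
      calc h Δ' - h (Δ (n+1)) ≤ (1 - 1/(r:ℝ)) * (h Δ' - h (Δ n)) := h1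
        _ ≤ (1 - 1/(r:ℝ)) * ((1 - 1/(r:ℝ))^n * h Δ') :=
            mul_le_mul_of_nonneg_left h2 hq0
        _ = (1 - 1/(r:ℝ))^(n+1) * h Δ' := by ring
  have hfin := ind r le_rfl
  -- (1-1/r)^r ≤ exp(-1)
  have hexp : (1 - 1/(r:ℝ))^r ≤ Real.exp (-1) := by
    have h1 : 1 - 1/(r:ℝ) ≤ Real.exp (-(1/(r:ℝ))) := by
      have := Real.add_one_le_exp (-(1/(r:ℝ)))
      linarith
    calc (1 - 1/(r:ℝ))^r ≤ (Real.exp (-(1/(r:ℝ))))^r := pow_le_pow_left₀ hq0 h1 r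
      _ = Real.exp ((r:ℝ) * -(1/(r:ℝ))) := (Real.exp_nat_mul _ r).symm
      _ = Real.exp (-1) := by
          congr 1
          field_simp
  have hpow : (1 - 1/(r:ℝ))^r * h Δ' ≤ Real.exp (-1) * h Δ' :=
    mul_le_mul_of_nonneg_right hexp hopt0
  have hE : Real.exp (-1) = 1 / Real.exp 1 := by
    rw [Real.exp_neg, inv_eq_one_div]
  nlinarith [hfin, hpow, hE]
end

section
/- Let h : 2^V → ℝ≥0 be monotone non-decreasing submodular with h(∅) = 0, let Δ_0 = ∅, Δ_1, …, Δ_r be the sets produced by the greedy algorithm (each step adding a maximal-marginal-gain element), and let Δ' be any subset of V with |Δ'| ≤ r. Then for every i, h(Δ') − h(Δ_{i+1}) ≤ (1 − 1/r)(h(Δ') − h(Δ_i)), and consequently h(Δ') − h(Δ_r) ≤ (1 − 1/r)^r · h(Δ'). -/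
/-- Telescoping bound: `h (S ∪ T) ≤ h T + ∑ v in S \ T, (h (insert v T) - h T)`. -/
lemma telescope_submod {V : Type*} [DecidableEq V]
    (h : Finset V → ℝ)
    (hsub : ∀ S T : Finset V, ∀ v : V, S ⊆ T → v ∉ T →
      h (insert v T) - h T ≤ h (insert v S) - h S) :
    ∀ (S T : Finset V), h (S ∪ T) ≤ h T + ∑ v ∈ S \ T, (h (insert v T) - h T) := by
  intro S
  induction S using Finset.induction_on with
  | empty => intro T; simp
  | @insert x S hx ih =>
    intro T
    by_cases hxT : x ∈ T
    · have : insert x S ∪ T = S ∪ T := by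
        ext y; simp only [Finset.mem_union, Finset.mem_insert]
        constructor
        · rintro (⟨rfl | h⟩ | h) <;> tauto
        · tauto
      rw [this]
      have hsd : insert x S \ T = S \ T := by
        ext y; simp only [Finset.mem_sdiff, Finset.mem_insert]
        constructor
        · rintro ⟨rfl | h, h2⟩ <;> tauto
        · tauto
      rw [hsd]; exact ih T
    · have hxST : x ∉ S ∪ T := by simp [hx, hxT]
      have h1 : insert x S ∪ T = insert x (S ∪ T) := Finset.insert_union x S T
      have h2 : insert x S \ T = insert x (S \ T) := by
        ext y
        simp only [Finset.mem_insert, Finset.mem_sdiff]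
        constructor
        · rintro ⟨rfl | hy, hyT⟩
          · exact Or.inl rfl
          · exact Or.inr ⟨hy, hyT⟩
        · rintro (rfl | ⟨hy, hyT⟩)
          · exact ⟨Or.inl rfl, hxT⟩
          · exact ⟨Or.inr hy, hyT⟩
      rw [h1, h2, Finset.sum_insert (by simp [hx, hxT])]
      have key := hsub T (S ∪ T) x Finset.subset_union_right hxST
      have := ih T
      linarith

/-- The per-step inequality of the greedy algorithm for monotone submodular
maximization: `h(Δ') − h(Δ_{i+1}) ≤ (1 − 1/r)(h(Δ') − h(Δ_i))` for each greedy
step, and consequently `h(Δ') − h(Δ_r) ≤ (1 − 1/r)^r · h(Δ')`. -/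
theorem greedy_per_step_inequality
    {V : Type*} [Fintype V] [DecidableEq V]
    (h : Finset V → ℝ) (r : ℕ) (hr : 0 < r)
    (hnonneg : ∀ S : Finset V, 0 ≤ h S)
    (hmono : ∀ S T : Finset V, S ⊆ T → h S ≤ h T)
    (hsub : ∀ S T : Finset V, ∀ v : V, S ⊆ T → v ∉ T →
      h (insert v T) - h T ≤ h (insert v S) - h S)
    (hzero : h ∅ = 0)
    (Δ : ℕ → Finset V)
    (hΔ0 : Δ 0 = ∅)
    (hgreedy : ∀ i, i < r → ∃ a : V, a ∉ Δ i ∧ Δ (i + 1) = insert a (Δ i) ∧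
      ∀ b : V, b ∉ Δ i →
        h (insert b (Δ i)) - h (Δ i) ≤ h (insert a (Δ i)) - h (Δ i))
    (Δ' : Finset V) (hΔ'card : Δ'.card ≤ r) :
    (∀ i, i < r →
      h Δ' - h (Δ (i + 1)) ≤ (1 - 1 / (r : ℝ)) * (h Δ' - h (Δ i))) ∧
    h Δ' - h (Δ r) ≤ (1 - 1 / (r : ℝ)) ^ r * h Δ' := by
  have hrR : (0 : ℝ) < (r : ℝ) := by exact_mod_cast hr
  have step : ∀ i, i < r →
      h Δ' - h (Δ (i + 1)) ≤ (1 - 1 / (r : ℝ)) * (h Δ' - h (Δ i)) := by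
    intro i hi
    obtain ⟨a, ha, hΔi1, hmax⟩ := hgreedy i hi
    set g := h (Δ (i + 1)) - h (Δ i) with hg
    have hgnn : 0 ≤ g := by
      have := hmono (Δ i) (Δ (i + 1)) (by rw [hΔi1]; exact Finset.subset_insert _ _)
      linarith
    -- h Δ' - h (Δ i) ≤ r * g
    have hbound : h Δ' - h (Δ i) ≤ (r : ℝ) * g := by
      have h1 : h Δ' ≤ h (Δ' ∪ Δ i) := hmono _ _ Finset.subset_union_left
      have h2 := telescope_submod h hsub Δ' (Δ i)
      have h3 : ∑ v ∈ Δ' \ Δ i, (h (insert v (Δ i)) - h (Δ i)) ≤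
          ((Δ' \ Δ i).card : ℝ) * g := by
        calc ∑ v ∈ Δ' \ Δ i, (h (insert v (Δ i)) - h (Δ i))
            ≤ ∑ _v ∈ Δ' \ Δ i, g := by
              apply Finset.sum_le_sum
              intro v hv
              have hvnot : v ∉ Δ i := (Finset.mem_sdiff.mp hv).2
              have := hmax v hvnot
              rw [hg, hΔi1]; linarith
          _ = ((Δ' \ Δ i).card : ℝ) * g := by
              rw [Finset.sum_const, nsmul_eq_mul]
      have hcard : ((Δ' \ Δ i).card : ℝ) ≤ (r : ℝ) := by
        have : (Δ' \ Δ i).card ≤ Δ'.card := Finset.card_le_card (Finset.sdiff_subset)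
        exact_mod_cast le_trans this hΔ'card
      have h4 : ((Δ' \ Δ i).card : ℝ) * g ≤ (r : ℝ) * g :=
        mul_le_mul_of_nonneg_right hcard hgnn
      linarith
    have : h Δ' - h (Δ (i + 1)) = (h Δ' - h (Δ i)) - g := by rw [hg]; ring
    rw [this]
    have hfield : (1 - 1 / (r : ℝ)) * (h Δ' - h (Δ i)) =
        (h Δ' - h (Δ i)) - (h Δ' - h (Δ i)) / r := by field_simp
    rw [hfield]
    have : (h Δ' - h (Δ i)) / r ≤ g := by
      rw [div_le_iff₀ hrR]; nlinarith
    linarith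
  refine ⟨step, ?_⟩
  have hfacnn : (0 : ℝ) ≤ 1 - 1 / (r : ℝ) := by
    have : 1 / (r : ℝ) ≤ 1 := by
      rw [div_le_one hrR]; exact_mod_cast hr
    linarith
  have main : ∀ i, i ≤ r → h Δ' - h (Δ i) ≤ (1 - 1 / (r : ℝ)) ^ i * h Δ' := by
    intro i
    induction i with
    | zero => intro _; simp [hΔ0, hzero]
    | succ n ih =>
      intro hn
      have hnr : n < r := hn
      have h1 := step n hnr
      have h2 := ih (le_of_lt hnr)
      calc h Δ' - h (Δ (n + 1)) ≤ (1 - 1 / (r : ℝ)) * (h Δ' - h (Δ n)) := h1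
        _ ≤ (1 - 1 / (r : ℝ)) * ((1 - 1 / (r : ℝ)) ^ n * h Δ') :=
            mul_le_mul_of_nonneg_left h2 hfacnn
        _ = (1 - 1 / (r : ℝ)) ^ (n + 1) * h Δ' := by ring
  exact main r le_rfl
end

section
/- For an integer-valued monotone submodular function h with h(∅) = 0, any feasible set S' for the constraint h(S) ≥ n with n ≤ h(V), and the greedy algorithm as above: at every iteration i before termination, the maximal marginal gain g_i satisfies g_i ≥ (h(V) − h(Δ_i)) / |S'| ≥ (n − h(Δ_i)) / |S'|. -/
/-- At every iteration of the greedy algorithm before termination, the maximal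
marginal gain `g_i` satisfies `g_i ≥ (h(S') − h(Δ_i)) / |S'| ≥
(n − h(Δ_i)) / |S'|` for any feasible set `S'` (with `h(S') ≥ n`). -/
theorem greedy_marginal_gain_lower_bound
    {V : Type*} [Fintype V] [DecidableEq V]
    (h : Finset V → ℤ) (n : ℤ)
    (hmono : ∀ S T : Finset V, S ⊆ T → h S ≤ h T)
    (hsub : ∀ S T : Finset V, ∀ v : V, S ⊆ T → v ∉ T →
      h (insert v T) - h T ≤ h (insert v S) - h S)
    (hzero : h ∅ = 0)
    (S' : Finset V) (hS' : S'.Nonempty) (hS'feas : n ≤ h S')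
    (Δi : Finset V) (hbefore : h Δi < n)
    (a : V) (ha : a ∉ Δi)
    (hamax : ∀ b : V, b ∉ Δi →
      h (insert b Δi) - h Δi ≤ h (insert a Δi) - h Δi) :
    ((h S' - h Δi : ℤ) : ℝ) / S'.card ≤ ((h (insert a Δi) - h Δi : ℤ) : ℝ) ∧
    ((n - h Δi : ℤ) : ℝ) / S'.card ≤ ((h (insert a Δi) - h Δi : ℤ) : ℝ) := by
  set g : ℤ := h (insert a Δi) - h Δi with hg
  have hg0 : 0 ≤ g := by
    have := hmono Δi (insert a Δi) (Finset.subset_insert a Δi)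
    omega
  -- marginal of any v w.r.t. Δi is ≤ g
  have hmarg : ∀ v : V, h (insert v Δi) - h Δi ≤ g := by
    intro v
    by_cases hv : v ∈ Δi
    · rw [Finset.insert_eq_self.mpr hv]; omega
    · exact hamax v hv
  -- key: h (Δi ∪ T) - h Δi ≤ |T| * g for any T
  have key : ∀ T : Finset V, h (Δi ∪ T) - h Δi ≤ (T.card : ℤ) * g := by
    intro T
    induction T using Finset.induction_on with
    | empty => simp
    | @insert v T hvT ih =>
      rw [Finset.union_insert]
      by_cases hv : v ∈ Δi ∪ T
      · rw [Finset.insert_eq_self.mpr hv]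
        calc h (Δi ∪ T) - h Δi ≤ (T.card : ℤ) * g := ih
          _ ≤ ((insert v T).card : ℤ) * g := by
            apply mul_le_mul_of_nonneg_right _ hg0
            exact_mod_cast Finset.card_le_card (Finset.subset_insert v T)
      · have h1 : h (insert v (Δi ∪ T)) - h (Δi ∪ T) ≤ h (insert v Δi) - h Δi :=
          hsub Δi (Δi ∪ T) v Finset.subset_union_left hv
        have h2 := hmarg v
        have hc : ((insert v T).card : ℤ) = T.card + 1 := by
          rw [Finset.card_insert_of_notMem hvT]; push_cast; ring
        rw [hc]
        nlinarith [ih]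
  have hkey : h S' - h Δi ≤ (S'.card : ℤ) * g := by
    calc h S' - h Δi ≤ h (Δi ∪ S') - h Δi := by
          have := hmono S' (Δi ∪ S') Finset.subset_union_right; omega
      _ ≤ (S'.card : ℤ) * g := key S'
  have hcardpos : (0 : ℝ) < S'.card := by
    exact_mod_cast Finset.card_pos.mpr hS'
  have h1 : ((h S' - h Δi : ℤ) : ℝ) / S'.card ≤ (g : ℝ) := by
    rw [div_le_iff₀ hcardpos]
    have : ((h S' - h Δi : ℤ) : ℝ) ≤ ((S'.card : ℤ) * g : ℤ) := by exact_mod_cast hkey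
    push_cast at this ⊢
    linarith
  refine ⟨h1, ?_⟩
  refine le_trans ?_ h1
  gcongr ((?_ : ℝ)) / _
  · exact_mod_cast sub_le_sub_right hS'feas (h Δi)
end

section
/- In a finite bipartite graph, if M and N are two matchings, then every connected component of the symmetric difference M Δ N (viewed as a graph on the matched vertices) is either a path or an even cycle whose edges alternate between M and N; consequently, if |N| > |M| then some component contains strictly more N-edges than M-edges and is an M-augmenting path. -/
/-!
In `M Δ N` two edges sharing a vertex come from different matchings, so every vertex has degree
at most two and the edges along any trail alternate between `M` and `N`. In a graph of maximum
degree two, a longest path through a vertex contains every edge of its component except possibly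
one joining its two ends, so every component is a path or a cycle; cycles are even because `G` is
bipartite. An alternating cycle of even length has as many `M`-edges as `N`-edges, so when
`|N \ M| > |M \ N|` summing over the components yields a path with more `N`-edges than
`M`-edges. Such a path begins and ends with `N`-edges, and since it exhausts its component no
`M`-edge meets its ends.
-/

open SimpleGraph

/-- A walk alternates with respect to `M` if consecutive edges differ in their
membership in `M` (equivalently, edges of `M Δ N` alternate between `M` and
`N`). -/
def WalkAlternates {V : Type*} [DecidableEq V] {G : SimpleGraph V} {u v : V}
    (M : Finset (Sym2 V)) (w : G.Walk u v) : Prop :=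
  ∀ i, ∀ hi : i + 1 < w.edges.length,
    (w.edges[i]'(by omega) ∈ M ↔ w.edges[i + 1]'hi ∉ M)

namespace List

variable {α : Type*} {p : α → Prop} [DecidablePred p]

theorem IsChain.countP_sub_countP_not {a : α} {l : List α}
    (h : (a :: l).IsChain (fun x y => p x ↔ ¬ p y)) :
    ((a :: l).countP p : ℤ) - (a :: l).countP (fun x => ¬ p x) =
      if Even l.length then (if p a then 1 else -1) else 0 := by
  induction l generalizing a with
  | nil => by_cases ha : p a <;> simp [ha]
  | cons b l ih =>
    rw [isChain_cons_cons] at h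
    have hb := ih h.2
    simp only [countP_cons] at hb ⊢
    by_cases ha : p a <;> by_cases hl : Even l.length <;>
      simp_all [Nat.even_add_one] <;> omega

theorem IsChain.countP_eq_countP_not_of_even {l : List α}
    (h : l.IsChain (fun x y => p x ↔ ¬ p y)) (hl : Even l.length) :
    l.countP p = l.countP (fun x => ¬ p x) := by
  cases l with
  | nil => rfl
  | cons a l =>
    have := h.countP_sub_countP_not
    rw [if_neg (by simpa [Nat.even_add_one] using hl)] at this
    omega

theorem IsChain.not_head_of_countP_lt {a : α} {l : List α}
    (h : (a :: l).IsChain (fun x y => p x ↔ ¬ p y))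
    (hlt : (a :: l).countP p < (a :: l).countP (fun x => ¬ p x)) : ¬ p a := by
  intro ha
  have := h.countP_sub_countP_not
  split_ifs at this <;> omega

theorem countP_mem_eq_countP_not_mem [DecidableEq α] {M N : Finset α}
    {l : List α} (hl : ∀ e ∈ l, e ∈ symmDiff M N) : l.countP (· ∈ N) = l.countP (· ∉ M) :=
  countP_congr fun e he => by
    have := Finset.mem_symmDiff.mp (hl e he)
    simp only [decide_eq_true_eq]
    tauto

end List

namespace SimpleGraph

section Alternation

variable {V : Type*} {H : SimpleGraph V} {M : Finset (Sym2 V)}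
  (hcol : ∀ {x y z}, H.Adj x y → H.Adj x z → y ≠ z → (s(x, y) ∈ M ↔ s(x, z) ∉ M))
include hcol

theorem Walk.IsTrail.isChain_edges {u v : V} {w : H.Walk u v} (hw : w.IsTrail) :
    w.edges.IsChain (fun e f => e ∈ M ↔ f ∉ M) := by
  induction w with
  | nil => simp
  | cons hux p ih =>
    rw [Walk.isTrail_cons] at hw
    cases p with
    | nil => simp
    | cons hxy q =>
      rw [Walk.edges_cons, Walk.edges_cons, List.isChain_cons_cons]
      refine ⟨?_, ih hw.1⟩
      rw [Sym2.eq_swap]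
      exact hcol hux.symm hxy (by rintro rfl; exact hw.2 (by simp [Sym2.eq_swap]))

theorem Walk.IsTrail.walkAlternates [DecidableEq V] {u v : V} {w : H.Walk u v}
    (hw : w.IsTrail) : WalkAlternates M w :=
  List.isChain_iff_getElem.mp (hw.isChain_edges hcol)

theorem ncard_neighborSet_le_two [Finite V] (x : V) : (H.neighborSet x).ncard ≤ 2 := by
  by_contra! h
  obtain ⟨a, b, c, ha, hb, hc, hab, hac, hbc⟩ := (Set.two_lt_ncard_iff (Set.toFinite _)).mp h
  have := hcol ha hb hab
  have := hcol ha hc hac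
  have := hcol hb hc hbc
  tauto

end Alternation

section Components

variable {V : Type*} {H : SimpleGraph V}

theorem connectedComponentMk_eq_of_mem_edgeSet {e : Sym2 V} (he : e ∈ H.edgeSet) {x y : V}
    (hx : x ∈ e) (hy : y ∈ e) : H.connectedComponentMk x = H.connectedComponentMk y := by
  induction e using Sym2.ind with
  | _ a b =>
    rcases Sym2.mem_iff.mp hx with rfl | rfl <;> rcases Sym2.mem_iff.mp hy with rfl | rfl
    exacts [rfl, ConnectedComponent.connectedComponentMk_eq_of_adj he,
      (ConnectedComponent.connectedComponentMk_eq_of_adj he).symm, rfl]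

theorem exists_countP_lt_of_card_filter_lt [Fintype V] {E : Finset (Sym2 V)}
    (hE : ∀ e, e ∈ H.edgeSet ↔ e ∈ E) (L : H.ConnectedComponent → List (Sym2 V))
    (hL : ∀ c, (L c).Nodup)
    (hmem : ∀ c e, e ∈ L c ↔ e ∈ H.edgeSet ∧ ∀ x ∈ e, H.connectedComponentMk x = c)
    {p q : Sym2 V → Prop} [DecidablePred p] [DecidablePred q]
    (hpq : (E.filter p).card < (E.filter q).card) : ∃ c, (L c).countP p < (L c).countP q := by
  classical
  have hsum (r : Sym2 V → Prop) [DecidablePred r] :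
      ∑ c, (L c).countP r = (E.filter r).card := by
    rw [Finset.card_eq_sum_card_fiberwise (f := fun e => H.connectedComponentMk (Quot.out e).1)
      (t := Finset.univ) fun _ _ => Finset.mem_coe.mpr (Finset.mem_univ _)]
    refine Finset.sum_congr rfl fun c _ => ?_
    rw [List.countP_eq_length_filter, ← List.toFinset_card_of_nodup ((hL c).filter _)]
    congr 1
    ext e
    simp only [List.mem_toFinset, List.mem_filter, hmem, Finset.mem_filter, hE,
      decide_eq_true_eq]
    constructor
    · rintro ⟨⟨he, hec⟩, hr⟩
      exact ⟨⟨he, hr⟩, hec _ (Sym2.out_fst_mem e)⟩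
    · rintro ⟨⟨he, hr⟩, rfl⟩
      exact ⟨⟨he, fun x hx => connectedComponentMk_eq_of_mem_edgeSet ((hE e).mpr he) hx
        (Sym2.out_fst_mem e)⟩, hr⟩
  obtain ⟨c, -, hc⟩ := Finset.exists_lt_of_sum_lt (s := Finset.univ)
    (f := fun c => (L c).countP p) (g := fun c => (L c).countP q) (by rwa [hsum p, hsum q])
  exact ⟨c, hc⟩

theorem exists_isPath_forall_adj_mem_support [Fintype V] (x : V) :
    ∃ (u v : V) (w : H.Walk u v), w.IsPath ∧ H.Reachable x u ∧
      (∀ y, H.Adj u y → y ∈ w.support) ∧ ∀ y, H.Adj v y → y ∈ w.support := by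
  classical
  let P (n : ℕ) : Prop := ∃ (u v : V) (w : H.Walk u v), w.IsPath ∧ H.Reachable x u ∧ w.length = n
  obtain ⟨u, v, w, hw, hxu, hlen⟩ : P (Nat.findGreatest P (Fintype.card V)) :=
    Nat.findGreatest_spec (Nat.zero_le _) ⟨x, x, .nil, .nil, .rfl, rfl⟩
  have hlongest : ∀ (a b : V) (w' : H.Walk a b), w'.IsPath → H.Reachable x a →
      w'.length ≤ w.length := fun a b w' hw' hxa =>
    hlen ▸ Nat.le_findGreatest hw'.length_lt.le ⟨a, b, w', hw', hxa, rfl⟩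
  refine ⟨u, v, w, hw, hxu, fun y hy => ?_, fun y hy => ?_⟩
  · by_contra hyw
    have := hlongest _ _ (.cons hy.symm w) ((Walk.cons_isPath_iff _ _).mpr ⟨hw, hyw⟩)
      (hxu.trans hy.reachable)
    simp at this
  · by_contra hyw
    have := hlongest _ _ (.cons hy.symm w.reverse)
      ((Walk.cons_isPath_iff _ _).mpr ⟨hw.reverse, by simpa using hyw⟩)
      (hxu.trans (w.reachable.trans hy.reachable))
    simp at this

end Components

section MaxDegreeTwo

variable {V : Type*} {H : SimpleGraph V} (hdeg : ∀ x, (H.neighborSet x).ncard ≤ 2)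
include hdeg

theorem Walk.IsPath.mk_mem_edges_of_adj [Finite V] {u v x y : V} {w : H.Walk u v}
    (hw : w.IsPath) (hx : x ∈ w.support) (hxu : x ≠ u) (hxv : x ≠ v) (hxy : H.Adj x y) :
    s(x, y) ∈ w.edges := by
  obtain ⟨i, rfl, hi⟩ := Walk.mem_support_iff_exists_getVert.mp hx
  have hi0 : i ≠ 0 := by rintro rfl; exact hxu w.getVert_zero
  have hil : i < w.length := hi.lt_of_ne (by rintro rfl; exact hxv w.getVert_length)
  have hnbr : w.toSubgraph.neighborSet (w.getVert i) = H.neighborSet (w.getVert i) :=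
    Set.eq_of_subset_of_ncard_le (fun _ => w.toSubgraph.adj_sub)
      ((hdeg _).trans (hw.ncard_neighborSet_toSubgraph_internal_eq_two hi0 hil).ge)
  exact Walk.adj_toSubgraph_iff_mem_edges.mp (hnbr ▸ hxy : y ∈ w.toSubgraph.neighborSet _)

section LongestPath

variable [Finite V] {u v : V} {w : H.Walk u v} (hw : w.IsPath)
  (hu : ∀ y, H.Adj u y → y ∈ w.support) (hv : ∀ y, H.Adj v y → y ∈ w.support)
include hw hu hv

theorem Walk.IsPath.mem_support_of_reachable {z : V} (hz : H.Reachable u z) :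
    z ∈ w.support := by
  by_contra hzw
  obtain ⟨p⟩ := hz
  obtain ⟨d, -, hd, hd'⟩ := p.exists_boundary_dart {y | y ∈ w.support} w.start_mem_support hzw
  apply hd'
  by_cases hdu : d.toProd.1 = u
  · exact hu _ (hdu ▸ d.adj)
  by_cases hdv : d.toProd.1 = v
  · exact hv _ (hdv ▸ d.adj)
  exact w.snd_mem_support_of_mem_edges (hw.mk_mem_edges_of_adj hdeg hd hdu hdv d.adj)

theorem Walk.IsPath.mk_mem_edges_or_eq {x y : V} (hxy : H.Adj x y) (hx : H.Reachable u x) :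
    s(x, y) ∈ w.edges ∨ s(x, y) = s(u, v) := by
  have hxw := hw.mem_support_of_reachable hdeg hu hv hx
  have hyw := hw.mem_support_of_reachable hdeg hu hv (hx.trans hxy.reachable)
  by_cases hx' : x = u ∨ x = v
  · by_cases hy' : y = u ∨ y = v
    · right
      rcases hx' with rfl | rfl <;> rcases hy' with rfl | rfl
      exacts [(hxy.ne rfl).elim, rfl, Sym2.eq_swap, (hxy.ne rfl).elim]
    · rw [not_or] at hy'
      left
      rw [Sym2.eq_swap]
      exact hw.mk_mem_edges_of_adj hdeg hyw hy'.1 hy'.2 hxy.symm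
  · rw [not_or] at hx'
    exact .inl (hw.mk_mem_edges_of_adj hdeg hxw hx'.1 hx'.2 hxy)

end LongestPath

theorem ConnectedComponent.exists_isPath_or_isCycle [Fintype V] (c : H.ConnectedComponent) :
    (∃ (u v : V) (w : H.Walk u v), H.connectedComponentMk u = c ∧ w.IsPath ∧
      ∀ e, e ∈ w.edges ↔ e ∈ H.edgeSet ∧ ∀ x ∈ e, H.connectedComponentMk x = c) ∨
    (∃ (u : V) (w : H.Walk u u), H.connectedComponentMk u = c ∧ w.IsCycle ∧
      ∀ e, e ∈ w.edges ↔ e ∈ H.edgeSet ∧ ∀ x ∈ e, H.connectedComponentMk x = c) := by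
  classical
  refine ConnectedComponent.ind (fun x => ?_) c
  obtain ⟨u, v, w, hw, hxu, hu, hv⟩ := exists_isPath_forall_adj_mem_support (H := H) x
  have hcu : H.connectedComponentMk u = H.connectedComponentMk x :=
    (ConnectedComponent.sound hxu).symm
  have hcv : H.connectedComponentMk v = H.connectedComponentMk x :=
    (ConnectedComponent.sound w.reachable).symm.trans hcu
  have hsound : ∀ e ∈ w.edges,
      e ∈ H.edgeSet ∧ ∀ z ∈ e, H.connectedComponentMk z = H.connectedComponentMk x :=
    fun e he => ⟨w.edges_subset_edgeSet he, fun z hz => (ConnectedComponent.sound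
      (w.takeUntil z (Walk.mem_support_of_mem_edges he hz)).reachable).symm.trans hcu⟩
  have hcomplete : ∀ e ∈ H.edgeSet, (∀ z ∈ e, H.connectedComponentMk z = H.connectedComponentMk x) →
      e ∈ w.edges ∨ e = s(u, v) := by
    intro e he hec
    induction e using Sym2.ind with
    | _ a b =>
      exact hw.mk_mem_edges_or_eq hdeg hu hv he
        (ConnectedComponent.exact (hcu.trans (hec a (Sym2.mem_mk_left a b)).symm))
  by_cases hcyc : H.Adj u v ∧ s(u, v) ∉ w.edges
  · refine .inr ⟨u, .cons hcyc.1 w.reverse, hcu,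
      (Walk.cons_isCycle_iff _ _).mpr ⟨hw.reverse, by simpa using hcyc.2⟩, fun e => ?_⟩
    rw [Walk.edges_cons, Walk.edges_reverse, List.mem_cons, List.mem_reverse]
    refine ⟨?_, fun ⟨he, hec⟩ => (hcomplete e he hec).symm⟩
    rintro (rfl | he)
    · exact ⟨hcyc.1, fun z hz => by rcases Sym2.mem_iff.mp hz with rfl | rfl; exacts [hcu, hcv]⟩
    · exact hsound e he
  · refine .inl ⟨u, v, w, hcu, hw, fun e => ⟨hsound e, fun ⟨he, hec⟩ => ?_⟩⟩
    refine (hcomplete e he hec).elim id fun huv => ?_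
    subst huv
    by_contra h
    exact hcyc ⟨he, h⟩

end MaxDegreeTwo

section Matchings

variable {V : Type*} [DecidableEq V] {M N : Finset (Sym2 V)}

abbrev symmDiffGraph (M N : Finset (Sym2 V)) : SimpleGraph V := fromEdgeSet ↑(symmDiff M N)

theorem mem_symmDiff_of_mem_edges {u v : V} {w : (symmDiffGraph M N).Walk u v} {e : Sym2 V}
    (he : e ∈ w.edges) : e ∈ symmDiff M N := by
  have he' := w.edges_subset_edgeSet he
  rw [edgeSet_fromEdgeSet] at he'
  exact he'.1

section Loopless

variable {G : SimpleGraph V} (hMG : ∀ e ∈ M, e ∈ G.edgeSet) (hNG : ∀ e ∈ N, e ∈ G.edgeSet)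
include hMG hNG

theorem symmDiffGraph_le : symmDiffGraph M N ≤ G := by
  intro x y h
  rw [fromEdgeSet_adj, Finset.mem_coe, Finset.mem_symmDiff] at h
  rcases h.1 with ⟨h, -⟩ | ⟨h, -⟩
  exacts [hMG _ h, hNG _ h]

theorem mem_edgeSet_symmDiffGraph (e : Sym2 V) :
    e ∈ (symmDiffGraph M N).edgeSet ↔ e ∈ symmDiff M N := by
  rw [edgeSet_fromEdgeSet, Set.mem_sdiff, Finset.mem_coe, and_iff_left_iff_imp]
  intro he
  rcases Finset.mem_symmDiff.mp he with ⟨h, -⟩ | ⟨h, -⟩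
  exacts [G.not_isDiag_of_mem_edgeSet (hMG e h), G.not_isDiag_of_mem_edgeSet (hNG e h)]

end Loopless

section TwoMatchings

variable (hM : ∀ e ∈ M, ∀ f ∈ M, e ≠ f → ∀ v : V, v ∈ e → v ∉ f)
  (hN : ∀ e ∈ N, ∀ f ∈ N, e ≠ f → ∀ v : V, v ∈ e → v ∉ f)

include hM hN in
theorem symmDiffGraph_adj_mem_iff_not_mem {x y z : V} (hy : (symmDiffGraph M N).Adj x y)
    (hz : (symmDiffGraph M N).Adj x z) (hyz : y ≠ z) : s(x, y) ∈ M ↔ s(x, z) ∉ M := by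
  rw [fromEdgeSet_adj, Finset.mem_coe, Finset.mem_symmDiff] at hy hz
  have hne : s(x, y) ≠ s(x, z) := fun h => hyz (Sym2.congr_right.mp h)
  constructor
  · exact fun hyM hzM => hM _ hyM _ hzM hne x (Sym2.mem_mk_left _ _) (Sym2.mem_mk_left _ _)
  · intro hzM
    by_contra hyM
    exact hN _ (by tauto) _ (by tauto) hne x (Sym2.mem_mk_left _ _) (Sym2.mem_mk_left _ _)

include hM hN in
theorem not_exists_mem_of_countP_lt {u v : V} (w : (symmDiffGraph M N).Walk u v)
    (hw : w.IsPath) (hu : ∀ e ∈ symmDiff M N, u ∈ e → e ∈ w.edges)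
    (hlt : w.edges.countP (· ∈ M) < w.edges.countP (· ∈ N)) : ¬ ∃ e ∈ M, u ∈ e := by
  rintro ⟨e, heM, hue⟩
  cases w with
  | nil => simp at hlt
  | cons hux p =>
    rename_i x
    have hchain := hw.isTrail.isChain_edges (symmDiffGraph_adj_mem_iff_not_mem hM hN)
    rw [List.countP_mem_eq_countP_not_mem fun _ => mem_symmDiff_of_mem_edges] at hlt
    have hfirst : s(u, x) ∉ M := hchain.not_head_of_countP_lt hlt
    have hfirstN : s(u, x) ∈ N := by
      have := mem_symmDiff_of_mem_edges (w := .cons hux p) (List.mem_cons_self ..)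
      rw [Finset.mem_symmDiff] at this
      tauto
    have hne : e ≠ s(u, x) := fun h => hfirst (h ▸ heM)
    by_cases heN : e ∈ N
    · exact hN _ heN _ hfirstN hne u hue (Sym2.mem_mk_left _ _)
    rcases List.mem_cons.mp (hu e (Finset.mem_symmDiff.mpr (.inl ⟨heM, heN⟩)) hue) with h | hep
    · exact hne h
    · exact ((Walk.cons_isPath_iff _ _).mp hw).2 (Walk.mem_support_of_mem_edges hep hue)

end TwoMatchings

section SymmDiffComponents

variable [Fintype V] {G : SimpleGraph V} (hMG : ∀ e ∈ M, e ∈ G.edgeSet)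
  (hNG : ∀ e ∈ N, e ∈ G.edgeSet) (hM : ∀ e ∈ M, ∀ f ∈ M, e ≠ f → ∀ v : V, v ∈ e → v ∉ f)
  (hN : ∀ e ∈ N, ∀ f ∈ N, e ≠ f → ∀ v : V, v ∈ e → v ∉ f) (hbip : G.Colorable 2)
include hMG hNG hM hN hbip

theorem symmDiffGraph_component_isPath_or_isCycle
    (c : (symmDiffGraph M N).ConnectedComponent) :
    (∃ (u v : V) (w : (symmDiffGraph M N).Walk u v),
      (symmDiffGraph M N).connectedComponentMk u = c ∧ w.IsPath ∧ WalkAlternates M w ∧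
      ∀ e : Sym2 V, e ∈ w.edges ↔
        (e ∈ symmDiff M N ∧ ∀ x ∈ e, (symmDiffGraph M N).connectedComponentMk x = c)) ∨
    (∃ (u : V) (w : (symmDiffGraph M N).Walk u u),
      (symmDiffGraph M N).connectedComponentMk u = c ∧ w.IsCycle ∧ Even w.length ∧
      WalkAlternates M w ∧
      ∀ e : Sym2 V, e ∈ w.edges ↔
        (e ∈ symmDiff M N ∧ ∀ x ∈ e, (symmDiffGraph M N).connectedComponentMk x = c)) := by
  have hcol : ∀ {x y z : V}, (symmDiffGraph M N).Adj x y → (symmDiffGraph M N).Adj x z →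
      y ≠ z → (s(x, y) ∈ M ↔ s(x, z) ∉ M) := symmDiffGraph_adj_mem_iff_not_mem hM hN
  simp only [← mem_edgeSet_symmDiffGraph hMG hNG]
  rcases c.exists_isPath_or_isCycle (ncard_neighborSet_le_two hcol) with
    ⟨u, v, w, hu, hw, hE⟩ | ⟨u, w, hu, hw, hE⟩
  · exact .inl ⟨u, v, w, hu, hw, hw.isTrail.walkAlternates hcol, hE⟩
  · have heven : Even w.length := two_colorable_iff_forall_loop_even.mp
      (hbip.mono_left (symmDiffGraph_le hMG hNG)) u w
    exact .inr ⟨u, w, hu, hw, heven, hw.isTrail.walkAlternates hcol, hE⟩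

theorem exists_isPath_countP_lt (hlt : M.card < N.card) :
    ∃ (u v : V) (w : (symmDiffGraph M N).Walk u v), w.IsPath ∧
      (∀ e ∈ symmDiff M N, u ∈ e → e ∈ w.edges) ∧ (∀ e ∈ symmDiff M N, v ∈ e → e ∈ w.edges) ∧
      w.edges.countP (· ∈ M) < w.edges.countP (· ∈ N) := by
  have hwalk (c : (symmDiffGraph M N).ConnectedComponent) :
      ∃ (u v : V) (w : (symmDiffGraph M N).Walk u v),
        (symmDiffGraph M N).connectedComponentMk u = c ∧ w.IsTrail ∧ (w.IsPath ∨ Even w.length) ∧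
        ∀ e : Sym2 V, e ∈ w.edges ↔
          (e ∈ symmDiff M N ∧ ∀ x ∈ e, (symmDiffGraph M N).connectedComponentMk x = c) := by
    rcases symmDiffGraph_component_isPath_or_isCycle hMG hNG hM hN hbip c with
      ⟨u, v, w, hu, hw, -, hE⟩ | ⟨u, w, hu, hw, hev, -, hE⟩
    exacts [⟨u, v, w, hu, hw.isTrail, .inl hw, hE⟩,
      ⟨u, u, w, hu, hw.isCircuit.isTrail, .inr hev, hE⟩]
  choose u v W hu htrail hshape hE using hwalk
  have hsdiff (A B : Finset (Sym2 V)) : (symmDiff A B).filter (· ∈ A) = A \ B := by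
    ext e
    simp only [Finset.mem_filter, Finset.mem_symmDiff, Finset.mem_sdiff]
    tauto
  obtain ⟨c, hc⟩ := exists_countP_lt_of_card_filter_lt (mem_edgeSet_symmDiffGraph hMG hNG)
    (fun c => (W c).edges) (fun c => (htrail c).edges_nodup)
    (fun c e => by rw [hE, mem_edgeSet_symmDiffGraph hMG hNG]) (p := (· ∈ M)) (q := (· ∈ N))
    (by rwa [hsdiff, symmDiff_comm, hsdiff, Finset.card_sdiff_lt_card_sdiff_iff])
  have hcover {x : V} (hx : (symmDiffGraph M N).connectedComponentMk x = c) :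
      ∀ e ∈ symmDiff M N, x ∈ e → e ∈ (W c).edges := fun e he hxe =>
    (hE c e).mpr ⟨he, fun y hy => (connectedComponentMk_eq_of_mem_edgeSet
      ((mem_edgeSet_symmDiffGraph hMG hNG e).mpr he) hy hxe).trans hx⟩
  refine ⟨u c, v c, W c, (hshape c).resolve_right fun hev => ?_, hcover (hu c),
    hcover ((ConnectedComponent.sound (W c).reachable).symm.trans (hu c)), hc⟩
  have := ((htrail c).isChain_edges (symmDiffGraph_adj_mem_iff_not_mem hM hN)
    ).countP_eq_countP_not_of_even (by rwa [Walk.length_edges])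
  rw [List.countP_mem_eq_countP_not_mem fun _ => mem_symmDiff_of_mem_edges] at hc
  omega

end SymmDiffComponents

end Matchings

end SimpleGraph

/-- Components of the symmetric difference of two matchings are alternating
paths or even alternating cycles; if `|N| > |M|` some component yields an
`M`-augmenting path containing more `N`-edges than `M`-edges. -/
theorem matching_symmDiff_components
    {V : Type*} [Fintype V] [DecidableEq V]
    (G : SimpleGraph V) (hbip : G.Colorable 2)
    (M N : Finset (Sym2 V))
    (hM : (∀ e ∈ M, e ∈ G.edgeSet) ∧
      ∀ e ∈ M, ∀ f ∈ M, e ≠ f → ∀ v : V, v ∈ e → v ∉ f)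
    (hN : (∀ e ∈ N, e ∈ G.edgeSet) ∧
      ∀ e ∈ N, ∀ f ∈ N, e ≠ f → ∀ v : V, v ∈ e → v ∉ f) :
    -- the graph on the edge set `M Δ N`
    let GD : SimpleGraph V := SimpleGraph.fromEdgeSet (↑(symmDiff M N))
    -- every connected component is an alternating path or an even
    -- alternating cycle
    (∀ c : GD.ConnectedComponent,
      (∃ (u v : V) (w : GD.Walk u v),
        GD.connectedComponentMk u = c ∧ w.IsPath ∧ WalkAlternates M w ∧
        ∀ e : Sym2 V, e ∈ w.edges ↔
          (e ∈ symmDiff M N ∧ ∀ x ∈ e, GD.connectedComponentMk x = c)) ∨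
      (∃ (u : V) (w : GD.Walk u u),
        GD.connectedComponentMk u = c ∧ w.IsCycle ∧ Even w.length ∧
        WalkAlternates M w ∧
        ∀ e : Sym2 V, e ∈ w.edges ↔
          (e ∈ symmDiff M N ∧ ∀ x ∈ e, GD.connectedComponentMk x = c))) ∧
    -- consequence: an `M`-augmenting path exists when `|N| > |M|`
    (M.card < N.card →
      ∃ (u v : V) (w : GD.Walk u v),
        w.IsPath ∧ WalkAlternates M w ∧
        (w.edges.filter (fun e => e ∈ M)).length <
          (w.edges.filter (fun e => e ∈ N)).length ∧
        (¬ ∃ e ∈ M, u ∈ e) ∧ (¬ ∃ e ∈ M, v ∈ e)) := by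
  intro GD
  refine ⟨symmDiffGraph_component_isPath_or_isCycle hM.1 hN.1 hM.2 hN.2 hbip, fun hlt => ?_⟩
  obtain ⟨u, v, w, hw, hu, hv, hcount⟩ := exists_isPath_countP_lt hM.1 hN.1 hM.2 hN.2 hbip hlt
  refine ⟨u, v, w, hw, hw.isTrail.walkAlternates (symmDiffGraph_adj_mem_iff_not_mem hM.2 hN.2),
    by simpa only [List.countP_eq_length_filter] using hcount,
    not_exists_mem_of_countP_lt hM.2 hN.2 w hw hu hcount,
    not_exists_mem_of_countP_lt hM.2 hN.2 w.reverse hw.reverse (by simpa using hv)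
      (by simpa using hcount)⟩
end
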